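/- Let π0 = (01234), π1 = (01432), π2 = (03241), π3 = (04231), cyclic permutations of {0,1,2,3,4}. Then there do NOT exist cyclic permutations γ0, γ1, γ2, γ3, γ4 of the 4-element set {a0,a1,a2,a3}, together with antiroutes P_{ij} from πi to πj for all 0 ≤ i < j ≤ 3 with |P_{01}| = |P_{12}| = |P_{23}| = |P_{03}| = 1 and |P_{02}| = |P_{13}| = 2, such that for every pair k ≠ ℓ in {0,1,2,3,4} the set Q_{kℓ} := { (a_i a_j) : 0 ≤ i < j ≤ 3 and the transposition (k ℓ) belongs to P_{ij} } is an antiroute from γk to γℓ. -/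

import Mathlib

/-!
Antiroutes of size one or two are very short, so the `P i j` are forced: `P 0 1 = P 2 3 = {(0 1)}`,
`P 1 2 = P 0 3 = {(2 3)}`, and each of `P 0 2`, `P 1 3` is `{(2 4), (3 4)}` or `{(0 4), (1 4)}`.
Then `Q 0 2`, `Q 0 3`, `Q 1 2` are empty, so `γ 1 = γ 0` and `γ 2 = γ 3 = γ 0⁻¹`, and `γ 0` is
reversed both by its opposite edges `a0a1, a2a3` and by `a0a3, a1a2`, hence is the square
`(a0 a1 a2 a3)` or its reverse. But `Q 0 4 ∪ Q 2 4` is a nonempty set of diagonals `(a0 a2)`,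
`(a1 a3)` of that square, while the first transposition of an antiroute out of `γ 0` or `γ 2`
must swap two adjacent symbols.
-/

/-- The cyclic permutation `(a b c d e)` of `Fin 5`, sending `a ↦ b ↦ c ↦ d ↦ e ↦ a`. -/
def cyc5 (a b c d e : Fin 5) : Equiv.Perm (Fin 5) :=
  Equiv.swap a e * Equiv.swap a d * Equiv.swap a c * Equiv.swap a b

/-- A permutation is *cyclic* if it consists of a single cycle through all elements. -/
def IsCyclicPerm {α : Type*} [Fintype α] [DecidableEq α] (σ : Equiv.Perm α) : Prop :=
  σ.IsCycle ∧ σ.support = Finset.univ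

/-- `RouteList γ L κ` holds when successively applying the transpositions in the list `L`
(each, at the moment it is applied, being a swap of two symbols adjacent in the current
cyclic permutation, and acting by conjugation, i.e. by interchanging the two symbols)
transforms `γ` into `κ`. -/
def RouteList {α : Type*} [DecidableEq α] :
    Equiv.Perm α → List (Equiv.Perm α) → Equiv.Perm α → Prop
  | γ, [], κ => γ = κ
  | γ, τ :: L, κ => ∃ x y, x ≠ y ∧ τ = Equiv.swap x y ∧ (γ x = y ∨ γ y = x) ∧
      RouteList (τ * γ * τ) L κ

/-- `P` is a *route* from `γ` to `κ`: a set of pairwise distinct transpositions that can be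
ordered into a sequence whose successive application transforms `γ` into `κ`. -/
def IsRoute {α : Type*} [Fintype α] [DecidableEq α] (γ κ : Equiv.Perm α)
    (P : Finset (Equiv.Perm α)) : Prop :=
  ∃ L : List (Equiv.Perm α), L.Nodup ∧ L.toFinset = P ∧ RouteList γ L κ

/-- `P` is an *antiroute* from `γ` to `κ`: a route from `γ` to the reverse `κ⁻¹` of `κ`. -/
def IsAntiroute {α : Type*} [Fintype α] [DecidableEq α] (γ κ : Equiv.Perm α)
    (P : Finset (Equiv.Perm α)) : Prop :=
  IsRoute γ κ⁻¹ P


/-- Given sets `P i j` of transpositions of `{0,1,2,3,4}` for pairs of indices `i < j` in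
`Fin 4`, the set `Q_{kℓ}` consists of the transpositions `(a_i a_j)` (for `i < j`)
such that the transposition `(k ℓ)` belongs to `P i j`. -/
def Qset (P : Fin 4 → Fin 4 → Finset (Equiv.Perm (Fin 5))) (k l : Fin 5) :
    Finset (Equiv.Perm (Fin 4)) :=
  ((Finset.univ : Finset (Fin 4 × Fin 4)).filter
      (fun p => p.1 < p.2 ∧ Equiv.swap k l ∈ P p.1 p.2)).image
    (fun p => Equiv.swap p.1 p.2)

/-- The rotations `π0 = (01234)`, `π1 = (01432)`, `π2 = (03241)`, `π3 = (04231)`. -/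
def pis : Fin 4 → Equiv.Perm (Fin 5) :=
  ![cyc5 0 1 2 3 4, cyc5 0 1 4 3 2, cyc5 0 3 2 4 1, cyc5 0 4 2 3 1]

open Equiv Finset

section Routes

variable {α : Type*} [DecidableEq α]

instance RouteList.decidable [Fintype α] :
    ∀ (γ : Perm α) (L : List (Perm α)) (κ : Perm α), Decidable (RouteList γ L κ)
  | γ, [], κ => decidable_of_iff (γ = κ) Iff.rfl
  | γ, τ :: L, κ =>
    haveI := fun γ' => RouteList.decidable γ' L κ
    decidable_of_iff (∃ x y, x ≠ y ∧ τ = swap x y ∧ (γ x = y ∨ γ y = x) ∧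
      RouteList (τ * γ * τ) L κ) Iff.rfl

theorem RouteList.exists_eq_swap {κ : Perm α} :
    ∀ {γ : Perm α} {L : List (Perm α)}, RouteList γ L κ → ∀ τ ∈ L, ∃ x y, τ = swap x y
  | _, σ :: _, ⟨x, y, _, hσ, _, hR⟩, τ, hτ => by
    rcases List.mem_cons.mp hτ with rfl | hτ
    · exact ⟨x, y, hσ⟩
    · exact hR.exists_eq_swap τ hτ

variable [Fintype α] {γ κ : Perm α} {P : Finset (Perm α)}

theorem isRoute_mk_iff {l : List (Perm α)} (hl : (l : Multiset (Perm α)).Nodup) :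
    IsRoute γ κ ⟨l, hl⟩ ↔ ∃ L ∈ l.permutations', RouteList γ L κ := by
  simp only [List.mem_permutations']
  constructor
  · rintro ⟨L, hL, hP, hR⟩
    refine ⟨L, Multiset.coe_eq_coe.mp ?_, hR⟩
    rw [← List.dedup_eq_self.mpr hL]
    exact congrArg Finset.val hP
  · rintro ⟨L, hLl, hR⟩
    refine ⟨L, hLl.nodup_iff.mpr hl, ?_, hR⟩
    ext τ
    simp [← Finset.mem_val, hLl.mem_iff]

/- `List.permutations'` rather than `Multiset.lists`: the latter is built on well-founded
recursion, which `decide` cannot unfold. -/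
instance IsRoute.decidable (γ κ : Perm α) : ∀ P : Finset (Perm α), Decidable (IsRoute γ κ P)
  | ⟨s, hs⟩ =>
    Quotient.recOnSubsingleton (motive := fun s => ∀ hs, Decidable (IsRoute γ κ ⟨s, hs⟩)) s
      (fun _ hl => decidable_of_iff _ (isRoute_mk_iff hl).symm) hs

instance IsAntiroute.decidable (γ κ : Perm α) (P : Finset (Perm α)) :
    Decidable (IsAntiroute γ κ P) :=
  inferInstanceAs (Decidable (IsRoute _ _ _))

theorem IsRoute.eq_of_empty (h : IsRoute γ κ ∅) : γ = κ := by
  obtain ⟨L, -, hL, hR⟩ := h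
  rw [List.toFinset_eq_empty_iff] at hL
  subst hL
  exact hR

theorem IsRoute.exists_eq_swap (h : IsRoute γ κ P) {τ : Perm α} (hτ : τ ∈ P) :
    ∃ x y, τ = swap x y := by
  obtain ⟨L, -, rfl, hR⟩ := h
  exact hR.exists_eq_swap τ (List.mem_toFinset.mp hτ)

theorem IsRoute.eq_singleton_of_card_eq_one {τ : Perm α}
    (hτ : ∀ x y, IsRoute γ κ {swap x y} → swap x y = τ) (h : IsRoute γ κ P)
    (hc : #P = 1) : P = {τ} := by
  obtain ⟨σ, rfl⟩ := card_eq_one.mp hc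
  obtain ⟨x, y, rfl⟩ := h.exists_eq_swap (mem_singleton_self σ)
  rw [hτ x y h]

theorem IsRoute.of_card_eq_two {p : Finset (Perm α) → Prop}
    (hp : ∀ x y z w, IsRoute γ κ {swap x y, swap z w} → p {swap x y, swap z w})
    (h : IsRoute γ κ P) (hc : #P = 2) : p P := by
  obtain ⟨σ, ρ, -, rfl⟩ := card_eq_two.mp hc
  obtain ⟨x, y, rfl⟩ := h.exists_eq_swap (mem_insert_self _ _)
  obtain ⟨z, w, rfl⟩ := h.exists_eq_swap (mem_insert_of_mem (mem_singleton_self _))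
  exact hp x y z w h

theorem IsRoute.eq_empty_of_not_adjacent (h : IsRoute γ κ P)
    (hP : ∀ x y, swap x y ∈ P → γ x ≠ y) : P = ∅ := by
  obtain ⟨L, -, rfl, hR⟩ := h
  cases L with
  | nil => rfl
  | cons τ L =>
    obtain ⟨x, y, -, rfl, hadj, -⟩ := hR
    rcases hadj with hxy | hyx
    · exact absurd hxy (hP x y (by simp))
    · exact absurd hyx (hP y x (by simp [swap_comm]))

end Routes

theorem Qset_congr {P P' : Fin 4 → Fin 4 → Finset (Perm (Fin 5))}
    (h : ∀ i j, i < j → P i j = P' i j) : Qset P = Qset P' := by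
  ext k l : 2
  unfold Qset
  congr 1
  refine filter_congr fun p _ => ?_
  by_cases hp : p.1 < p.2
  · simp [hp, h _ _ hp]
  · simp [hp]

theorem swap_eq_of_isAntiroute_pis01 :
    ∀ x y : Fin 5, IsAntiroute (pis 0) (pis 1) {swap x y} → swap x y = swap 0 1 := by
  decide +kernel

theorem swap_eq_of_isAntiroute_pis12 :
    ∀ x y : Fin 5, IsAntiroute (pis 1) (pis 2) {swap x y} → swap x y = swap 2 3 := by
  decide +kernel

theorem swap_eq_of_isAntiroute_pis23 :
    ∀ x y : Fin 5, IsAntiroute (pis 2) (pis 3) {swap x y} → swap x y = swap 0 1 := by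
  decide +kernel

theorem swap_eq_of_isAntiroute_pis03 :
    ∀ x y : Fin 5, IsAntiroute (pis 0) (pis 3) {swap x y} → swap x y = swap 2 3 := by
  decide +kernel

def antirouteA : Finset (Perm (Fin 5)) := {swap 2 4, swap 3 4}

def antirouteB : Finset (Perm (Fin 5)) := {swap 0 4, swap 1 4}

theorem eq_antirouteA_or_B_of_isAntiroute_pis02 : ∀ x y z w : Fin 5,
    IsAntiroute (pis 0) (pis 2) {swap x y, swap z w} →
      {swap x y, swap z w} = antirouteA ∨ {swap x y, swap z w} = antirouteB := by
  decide +kernel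

theorem eq_antirouteA_or_B_of_isAntiroute_pis13 : ∀ x y z w : Fin 5,
    IsAntiroute (pis 1) (pis 3) {swap x y, swap z w} →
      {swap x y, swap z w} = antirouteA ∨ {swap x y, swap z w} = antirouteB := by
  decide +kernel

def keyAntiroutes (S T : Finset (Perm (Fin 5))) : Fin 4 → Fin 4 → Finset (Perm (Fin 5)) :=
  ![![∅, {swap 0 1}, S, {swap 2 3}],
    ![∅, ∅, {swap 2 3}, T],
    ![∅, ∅, ∅, {swap 0 1}],
    ![∅, ∅, ∅, ∅]]

theorem Qset_keyAntiroutes {S T : Finset (Perm (Fin 5))}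
    (hS : S = antirouteA ∨ S = antirouteB) (hT : T = antirouteA ∨ T = antirouteB) :
    let Q := Qset (keyAntiroutes S T)
    Q 0 2 = ∅ ∧ Q 0 3 = ∅ ∧ Q 1 2 = ∅ ∧
      Q 0 1 = {swap 0 1, swap 2 3} ∧ Q 2 3 = {swap 0 3, swap 1 2} ∧
      Q 0 4 ∪ Q 2 4 ≠ ∅ ∧ Q 0 4 ∪ Q 2 4 ⊆ {swap 0 2, swap 1 3} := by
  rcases hS with rfl | rfl <;> rcases hT with rfl | rfl <;> decide

theorem mem_finRotate_of_isAntiroute_self : ∀ g : Perm (Fin 4),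
    IsAntiroute g g {swap 0 1, swap 2 3} → IsAntiroute g⁻¹ g⁻¹ {swap 0 3, swap 1 2} →
      g ∈ ({finRotate 4, (finRotate 4)⁻¹} : Finset (Perm (Fin 4))) := by
  decide +kernel

theorem finRotate_four_not_adjacent_diagonal :
    ∀ g ∈ ({finRotate 4, (finRotate 4)⁻¹} : Finset (Perm (Fin 4))), ∀ x y : Fin 4,
      swap x y ∈ ({swap 0 2, swap 1 3} : Finset (Perm (Fin 4))) → g x ≠ y ∧ g⁻¹ x ≠ y := by
  decide +kernel

theorem false_of_isAntiroute_family {γ : Fin 5 → Perm (Fin 4)}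
    {Q : Fin 5 → Fin 5 → Finset (Perm (Fin 4))}
    (hγ : ∀ k l, k ≠ l → IsAntiroute (γ k) (γ l) (Q k l))
    (h02 : Q 0 2 = ∅) (h03 : Q 0 3 = ∅) (h12 : Q 1 2 = ∅)
    (h01 : Q 0 1 = {swap 0 1, swap 2 3}) (h23 : Q 2 3 = {swap 0 3, swap 1 2})
    (h4 : Q 0 4 ∪ Q 2 4 ≠ ∅) (hdiag : Q 0 4 ∪ Q 2 4 ⊆ {swap 0 2, swap 1 3}) : False := by
  have e02 : γ 0 = (γ 2)⁻¹ := (h02 ▸ hγ 0 2 (by decide) : IsRoute _ _ ∅).eq_of_empty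
  have e03 : γ 0 = (γ 3)⁻¹ := (h03 ▸ hγ 0 3 (by decide) : IsRoute _ _ ∅).eq_of_empty
  have e12 : γ 1 = (γ 2)⁻¹ := (h12 ▸ hγ 1 2 (by decide) : IsRoute _ _ ∅).eq_of_empty
  have hγ2 : γ 2 = (γ 0)⁻¹ := by rw [e02, inv_inv]
  have hγ3 : γ 3 = (γ 0)⁻¹ := by rw [e03, inv_inv]
  have hrot := mem_finRotate_of_isAntiroute_self (γ 0)
    (by simpa [h01, e12, ← e02] using hγ 0 1 (by decide))
    (by simpa [h23, hγ2, hγ3] using hγ 2 3 (by decide))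
  have hnadj := finRotate_four_not_adjacent_diagonal (γ 0) hrot
  have h04 : Q 0 4 = ∅ := (hγ 0 4 (by decide)).eq_empty_of_not_adjacent fun x y hxy =>
    (hnadj x y (hdiag (mem_union_left _ hxy))).1
  have h24 : Q 2 4 = ∅ := (hγ 2 4 (by decide)).eq_empty_of_not_adjacent fun x y hxy =>
    hγ2 ▸ (hnadj x y (hdiag (mem_union_right _ hxy))).2
  exact h4 (by rw [h04, h24, union_self])

/-- There do not exist cyclic permutations `γ0, …, γ4` of a 4-element set, together with
antiroutes `P i j` from `π i` to `π j` with `|P 0 1| = |P 1 2| = |P 2 3| = |P 0 3| = 1` and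
`|P 0 2| = |P 1 3| = 2`, such that for all `k ≠ ℓ` the set `Q_{kℓ}` is an antiroute from
`γ k` to `γ ℓ`. -/
theorem no_key_cycle_configuration :
    ¬ ∃ (γ : Fin 5 → Equiv.Perm (Fin 4))
        (P : Fin 4 → Fin 4 → Finset (Equiv.Perm (Fin 5))),
      (∀ k, IsCyclicPerm (γ k)) ∧
      (∀ i j : Fin 4, i < j → IsAntiroute (pis i) (pis j) (P i j)) ∧
      (P 0 1).card = 1 ∧ (P 1 2).card = 1 ∧ (P 2 3).card = 1 ∧ (P 0 3).card = 1 ∧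
      (P 0 2).card = 2 ∧ (P 1 3).card = 2 ∧
      (∀ k l : Fin 5, k ≠ l → IsAntiroute (γ k) (γ l) (Qset P k l)) := by
  rintro ⟨γ, P, -, hP, c01, c12, c23, c03, c02, c13, hγ⟩
  have h01 := IsRoute.eq_singleton_of_card_eq_one swap_eq_of_isAntiroute_pis01
    (hP 0 1 (by decide)) c01
  have h12 := IsRoute.eq_singleton_of_card_eq_one swap_eq_of_isAntiroute_pis12
    (hP 1 2 (by decide)) c12
  have h23 := IsRoute.eq_singleton_of_card_eq_one swap_eq_of_isAntiroute_pis23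
    (hP 2 3 (by decide)) c23
  have h03 := IsRoute.eq_singleton_of_card_eq_one swap_eq_of_isAntiroute_pis03
    (hP 0 3 (by decide)) c03
  have h02 := IsRoute.of_card_eq_two (p := fun S => S = antirouteA ∨ S = antirouteB)
    eq_antirouteA_or_B_of_isAntiroute_pis02 (hP 0 2 (by decide)) c02
  have h13 := IsRoute.of_card_eq_two (p := fun S => S = antirouteA ∨ S = antirouteB)
    eq_antirouteA_or_B_of_isAntiroute_pis13 (hP 1 3 (by decide)) c13
  have hQ : Qset P = Qset (keyAntiroutes (P 0 2) (P 1 3)) := Qset_congr fun i j hij => by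
    fin_cases i <;> fin_cases j <;> first | exact absurd hij (by decide) | assumption | rfl
  obtain ⟨q02, q03, q12, q01, q23, q4, qdiag⟩ := Qset_keyAntiroutes h02 h13
  exact false_of_isAntiroute_family (hQ ▸ hγ) q02 q03 q12 q01 q23 q4 qdiag
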